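/- Let α = [0; a₁, a₂, …] ∈ (0,1) be irrational with denominators of convergents (qₙ), and let (xₙ) be the increasing enumeration of the set {r qₙ : n ∈ ℕ, 1 ≤ r ≤ a_{n+1}}. Then the characterized subgroup t_{(xₙ)}(𝕋) is countably infinite; more precisely t_{(xₙ)}(𝕋) = ⟨α⟩, the cyclic subgroup of 𝕋 generated by (the class of) α. -/

import Mathlib

open Filter Topology

noncomputable section

/-- The circle group `𝕋 = ℝ/ℤ`. -/
abbrev Circle1 : Type := AddCircle (1 : ℝ)

/-- A set of naturals has natural density zero. -/
def DensityZero (A : Set ℕ) : Prop :=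
  Tendsto (fun n : ℕ => ((A ∩ Set.Icc 1 n).ncard : ℝ) / n) atTop (𝓝 0)

/-- Statistical convergence to `0` of a sequence in the circle. -/
def StatTendstoZero (x : ℕ → Circle1) : Prop :=
  ∀ ε : ℝ, 0 < ε → DensityZero {n : ℕ | ε ≤ ‖x n‖}

/-- The characterized subgroup `t_(a_n)(𝕋)`. -/
def charSet (a : ℕ → ℤ) : Set Circle1 :=
  {x : Circle1 | Tendsto (fun n : ℕ => a n • x) atTop (𝓝 0)}

/-- The statistically characterized subgroup `t^s_(a_n)(𝕋)`. -/
def statCharSet (a : ℕ → ℤ) : Set Circle1 :=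
  {x : Circle1 | StatTendstoZero (fun n : ℕ => a n • x)}

namespace CF

/-- Gauss-map orbit of `α`: `G α 0 = α`, `G α (n+1) = {1 / G α n}`. -/
def G (α : ℝ) : ℕ → ℝ
  | 0 => α
  | n + 1 => Int.fract (G α n)⁻¹

/-- The partial quotients of the regular continued fraction `α = [0; a 1, a 2, …]`
(with the convention `a 0 = 0`). -/
def a (α : ℝ) : ℕ → ℕ
  | 0 => 0
  | n + 1 => ⌊(G α n)⁻¹⌋₊

/-- Denominators of the convergents of the continued fraction of `α`. -/
def q (α : ℝ) : ℕ → ℕ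
  | 0 => 1
  | 1 => a α 1
  | (n + 2) => a α (n + 2) * q α (n + 1) + q α n

/-- Numerators of the convergents of the continued fraction of `α`. -/
def p (α : ℝ) : ℕ → ℕ
  | 0 => 0
  | 1 => 1
  | (n + 2) => a α (n + 2) * p α (n + 1) + p α n

/-- `θ n = q n * α - p n`. -/
def θ (α : ℝ) (n : ℕ) : ℝ := (q α n : ℝ) * α - (p α n : ℝ)

end CF

open CF

/-!
Write `θₙ = qₙα - pₙ`. Along the Gauss-map orbit, `|θₙ| = G₀ ⋯ Gₙ` and `a_{n+1} Gₙ ≤ 1`, so every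
`r qₙ α ≡ r θₙ` with `r ≤ a_{n+1}` is at most `|θ_{n-1}| → 0`; hence `⟨α⟩ ⊆ t_(xₙ)(𝕋)`.

Conversely, if `xₙ y → 0` then `a_{n+1} ‖qₙ y‖ → 0`, because no multiple `r qₙ y` with
`r ≤ a_{n+1}` can wrap around the circle. Then the nearest integers `cₙ` to `qₙ y` eventually
satisfy the recurrence `c_{n+2} = a_{n+2} c_{n+1} + cₙ` shared by `qₙ` and `θₙ`, so the Casoratian
of `(cₙ)` and `(θₙ)` is eventually constant. It is an integer combination of `α` and `1`, and it
tends to `y` because the Casoratian of `(qₙ)` and `(θₙ)` is `1`.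
-/

section Casoratian

variable {R : Type*} [CommRing R]

/-- The Casoratian of `u` and `v`, normalised by the sign `(-1) ^ n` so that it is constant along
solutions of the recurrences `w (n + 2) = b (n + 2) * w (n + 1) + w n`. -/
def casoratian (u v : ℕ → R) (n : ℕ) : R := (-1) ^ n * (u (n + 1) * v n - u n * v (n + 1))

theorem casoratian_succ {b u v : ℕ → R} {n : ℕ} (hu : u (n + 2) = b (n + 2) * u (n + 1) + u n)
    (hv : v (n + 2) = b (n + 2) * v (n + 1) + v n) :
    casoratian u v (n + 1) = casoratian u v n := by
  rw [casoratian, casoratian, hu, hv, pow_succ]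
  ring

theorem casoratian_eq_of_le {b u v : ℕ → R} {N : ℕ}
    (hu : ∀ n ≥ N, u (n + 2) = b (n + 2) * u (n + 1) + u n)
    (hv : ∀ n ≥ N, v (n + 2) = b (n + 2) * v (n + 1) + v n) {n : ℕ} (hn : N ≤ n) :
    casoratian u v n = casoratian u v N := by
  induction n, hn using Nat.le_induction with
  | base => rfl
  | succ n hn ih => rw [casoratian_succ (hu n hn) (hv n hn), ih]

end Casoratian

theorem tendsto_casoratian_zero {u v : ℕ → ℝ} {B : ℝ} (hu : ∀ n, |u n| ≤ B)
    (hv : Tendsto v atTop (𝓝 0)) : Tendsto (casoratian u v) atTop (𝓝 0) := by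
  refine squeeze_zero_norm (a := fun n => B * |v n| + B * |v (n + 1)|) (fun n => ?_) ?_
  · rw [Real.norm_eq_abs, casoratian, abs_mul, abs_pow, abs_neg, abs_one, one_pow, one_mul]
    refine (abs_sub _ _).trans (add_le_add ?_ ?_) <;> rw [abs_mul] <;>
      exact mul_le_mul_of_nonneg_right (hu _) (abs_nonneg _)
  · simpa using (hv.abs.const_mul B).add ((hv.comp (tendsto_add_atTop_nat 1)).abs.const_mul B)

namespace Circle1

theorem coe_intCast (k : ℤ) : ((k : ℝ) : Circle1) = 0 :=
  (AddCircle.coe_eq_zero_iff 1).2 ⟨k, by simp⟩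

theorem norm_coe_le_abs (s : ℝ) : ‖(s : Circle1)‖ ≤ |s| := by
  simpa [UnitAddCircle.norm_eq] using round_le s 0

theorem norm_nsmul_coe (n : ℕ) (s : ℝ) : ‖n • (s : Circle1)‖ = |n * s - round (n * s)| := by
  rw [← AddCircle.coe_nsmul, nsmul_eq_mul, UnitAddCircle.norm_eq]

theorem norm_nsmul_eq_mul_norm {t : Circle1} {n : ℕ} (h : n * ‖t‖ ≤ 1 / 2) :
    ‖n • t‖ = n * ‖t‖ := by
  induction t using QuotientAddGroup.induction_on with
  | H s =>
    have hs : ((s - round s : ℝ) : Circle1) = s := by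
      rw [AddCircle.coe_sub, coe_intCast, sub_zero]
    rw [← hs, UnitAddCircle.norm_eq, round_sub_intCast, sub_self, Int.cast_zero, sub_zero] at h ⊢
    rw [← AddCircle.coe_nsmul, nsmul_eq_mul,
      (AddCircle.norm_coe_eq_abs_iff 1 one_ne_zero).2 (by rwa [abs_one, abs_mul, Nat.abs_cast]),
      abs_mul, Nat.abs_cast]

/-- Inductively `r ‖t‖ < ε ≤ 1/4` forces `‖(r + 1) • t‖ = (r + 1) ‖t‖`: no multiple wraps around. -/
theorem mul_norm_lt_of_forall_norm_nsmul_lt {t : Circle1} {ε : ℝ} {R : ℕ} (hε : 0 < ε)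
    (hε' : ε ≤ 1 / 4) (h : ∀ r, 1 ≤ r → r ≤ R → ‖r • t‖ < ε) : R * ‖t‖ < ε := by
  suffices ∀ r ≤ R, r * ‖t‖ < ε from this R le_rfl
  intro r
  induction r with
  | zero => simpa using hε
  | succ r ih =>
    intro hr
    have h₁ : ‖t‖ < ε := by simpa using h 1 le_rfl (by omega)
    have h₂ : (r + 1 : ℕ) * ‖t‖ ≤ 1 / 2 := by
      push_cast
      linarith [ih (by omega)]
    rw [← norm_nsmul_eq_mul_norm h₂]
    exact h _ (by omega) hr

end Circle1

def charSubgroup (u : ℕ → ℤ) : AddSubgroup Circle1 where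
  carrier := charSet u
  zero_mem' := by simp [charSet]
  add_mem' {s t} hs ht := by
    change Tendsto _ _ _
    simpa only [smul_add, add_zero] using hs.add ht
  neg_mem' {s} hs := by
    change Tendsto _ _ _
    simpa only [smul_neg, neg_zero] using hs.neg

namespace CF

variable {α : ℝ}

theorem irrational_G (hirr : Irrational α) : ∀ n, Irrational (G α n)
  | 0 => hirr
  | n + 1 => by
    rw [G, ← Int.self_sub_floor]
    exact (irrational_G hirr n).inv.sub_intCast _

theorem G_mem_Ioo (hα : α ∈ Set.Ioo (0 : ℝ) 1) (hirr : Irrational α) :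
    ∀ n, G α n ∈ Set.Ioo (0 : ℝ) 1
  | 0 => hα
  | n + 1 => by
    refine ⟨(Int.fract_nonneg _).lt_of_ne fun h => ?_, Int.fract_lt_one _⟩
    exact (irrational_G hirr (n + 1)).ne_int 0 (by rw [G, ← h, Int.cast_zero])

def gaussProd (α : ℝ) (n : ℕ) : ℝ := ∏ i ∈ Finset.range n, G α i

theorem gaussProd_succ (n : ℕ) : gaussProd α (n + 1) = gaussProd α n * G α n :=
  Finset.prod_range_succ _ _

theorem q_add_two (n : ℕ) :
    (q α (n + 2) : ℝ) = a α (n + 2) * q α (n + 1) + q α n := by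
  push_cast [q]; rfl

theorem θ_add_two (n : ℕ) : θ α (n + 2) = a α (n + 2) * θ α (n + 1) + θ α n := by
  simp only [θ, q, p]
  push_cast
  ring

theorem casoratian_q_θ (n : ℕ) : casoratian (fun n => (q α n : ℝ)) (θ α) n = 1 := by
  rw [casoratian_eq_of_le (b := fun n => (a α n : ℝ)) (fun n _ => q_add_two n)
    (fun n _ => θ_add_two n) (Nat.zero_le n)]
  simp [casoratian, θ, q, p]

def denomMultiples (α : ℝ) : Set ℕ := {m | ∃ n r : ℕ, 1 ≤ r ∧ r ≤ a α (n + 1) ∧ m = r * q α n}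

theorem coe_θ (n : ℕ) : (θ α n : Circle1) = q α n • (α : Circle1) := by
  rw [θ, AddCircle.coe_sub, ← Int.cast_natCast (p α n), Circle1.coe_intCast, sub_zero,
    ← nsmul_eq_mul, AddCircle.coe_nsmul]

theorem coe_casoratian_mem_zmultiples (d : ℕ → ℤ) (n : ℕ) :
    ((casoratian (fun n => (d n : ℝ)) (θ α) n : ℝ) : Circle1) ∈
      AddSubgroup.zmultiples (α : Circle1) := by
  have h : casoratian (fun n => (d n : ℝ)) (θ α) n =
      (((-1) ^ n * (d (n + 1) * q α n - d n * q α (n + 1)) : ℤ) : ℝ) * α -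
        (((-1) ^ n * (d (n + 1) * p α n - d n * p α (n + 1)) : ℤ) : ℝ) := by
    simp only [casoratian, θ]
    push_cast
    ring
  rw [h, AddCircle.coe_sub, Circle1.coe_intCast, sub_zero, ← zsmul_eq_mul, AddCircle.coe_zsmul]
  exact AddSubgroup.zsmul_mem_zmultiples _ _

section Gauss

variable (hG : ∀ n, G α n ∈ Set.Ioo (0 : ℝ) 1)
include hG

theorem one_le_a (n : ℕ) : 1 ≤ a α (n + 1) :=
  Nat.le_floor <| by
    rw [Nat.cast_one]
    exact (one_lt_inv₀ (hG n).1).2 (hG n).2 |>.le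

theorem G_succ (n : ℕ) : G α (n + 1) = (G α n)⁻¹ - a α (n + 1) := by
  rw [G, a, Int.fract, natCast_floor_eq_intCast_floor (inv_nonneg.2 (hG n).1.le)]

theorem a_mul_G_le_one (n : ℕ) : a α (n + 1) * G α n ≤ 1 :=
  (le_inv_mul_iff₀' (hG n).1).1 <| by
    rw [mul_one]
    exact Nat.floor_le (inv_nonneg.2 (hG n).1.le)

theorem G_mul_G_succ_lt_half (n : ℕ) : G α n * G α (n + 1) < 1 / 2 := by
  have h := G_succ hG n
  have h₁ : (1 : ℝ) ≤ a α (n + 1) := by exact_mod_cast one_le_a hG n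
  have h₂ := (hG n).1
  have h₃ := (hG (n + 1)).2
  have : G α n * (G α (n + 1) + a α (n + 1)) = 1 := by
    rw [h, sub_add_cancel, mul_inv_cancel₀ h₂.ne']
  nlinarith

theorem gaussProd_nonneg (n : ℕ) : 0 ≤ gaussProd α n :=
  Finset.prod_nonneg fun i _ => (hG i).1.le

theorem θ_eq : ∀ n, θ α n = (-1) ^ n * gaussProd α (n + 1)
  | 0 => by simp [θ, q, p, gaussProd, G]
  | 1 => by
    have h := G_succ hG 0
    have h₀ : G α 0 ≠ 0 := (hG 0).1.ne'
    simp only [gaussProd, Finset.prod_range_succ, Finset.prod_range_zero, θ, q, p] at h ⊢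
    rw [h, G] at *
    field_simp
    ring
  | n + 2 => by
    have h := G_succ hG (n + 1)
    have h₀ : G α (n + 1) ≠ 0 := (hG (n + 1)).1.ne'
    rw [θ_add_two, θ_eq (n + 1), θ_eq n, gaussProd_succ (n + 2), gaussProd_succ (n + 1), h]
    field_simp
    ring

theorem abs_θ (n : ℕ) : |θ α n| = gaussProd α (n + 1) := by
  rw [θ_eq hG, abs_mul, abs_pow, abs_neg, abs_one, one_pow, one_mul,
    abs_of_nonneg (gaussProd_nonneg hG _)]

theorem a_mul_abs_θ_le (n : ℕ) : a α (n + 1) * |θ α n| ≤ gaussProd α n := by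
  rw [abs_θ hG, gaussProd_succ, mul_left_comm]
  exact mul_le_of_le_one_right (gaussProd_nonneg hG n) (a_mul_G_le_one hG n)

theorem gaussProd_le_half_pow : ∀ n, gaussProd α n ≤ (1 / 2) ^ (n / 2)
  | 0 => by simp [gaussProd]
  | 1 => by simpa [gaussProd] using (hG 0).2.le
  | n + 2 => by
    rw [gaussProd_succ, gaussProd_succ, mul_assoc,
      show (n + 2) / 2 = n / 2 + 1 by omega, pow_succ]
    exact mul_le_mul (gaussProd_le_half_pow n) (G_mul_G_succ_lt_half hG n).le
      (mul_nonneg (hG n).1.le (hG (n + 1)).1.le) (by positivity)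

theorem tendsto_gaussProd : Tendsto (gaussProd α) atTop (𝓝 0) := by
  refine squeeze_zero (gaussProd_nonneg hG) (gaussProd_le_half_pow hG) ?_
  exact (tendsto_pow_atTop_nhds_zero_of_lt_one (by norm_num) (by norm_num)).comp
    (Nat.tendsto_div_const_atTop two_ne_zero)

theorem tendsto_θ : Tendsto (θ α) atTop (𝓝 0) :=
  squeeze_zero_norm (fun n => (abs_θ hG n).le)
    ((tendsto_gaussProd hG).comp (tendsto_add_atTop_nat 1))

theorem one_le_q : ∀ n, 1 ≤ q α n
  | 0 => le_rfl
  | 1 => one_le_a hG 0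
  | n + 2 => le_add_left (one_le_q n)

theorem le_q : ∀ n, n ≤ q α n
  | 0 => Nat.zero_le _
  | 1 => one_le_a hG 0
  | n + 2 => by
    have h₁ := le_q (n + 1)
    have h₂ := one_le_q hG n
    have h₃ : q α (n + 1) ≤ a α (n + 2) * q α (n + 1) :=
      Nat.le_mul_of_pos_left _ (one_le_a hG (n + 1))
    show n + 2 ≤ a α (n + 2) * q α (n + 1) + q α n
    omega

theorem coe_mem_charSet {x : ℕ → ℕ} (hx : Function.Injective x)
    (hrange : Set.range x ⊆ denomMultiples α) : (α : Circle1) ∈ charSet (fun m => (x m : ℤ)) := by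
  refine NormedAddGroup.tendsto_nhds_zero.2 fun ε hε => ?_
  obtain ⟨N, hN⟩ := eventually_atTop.1 ((tendsto_gaussProd hG).eventually (gt_mem_nhds hε))
  have hfin : (⋃ n ∈ Finset.range N, (· * q α n) '' Set.Icc 1 (a α (n + 1))).Finite :=
    (Finset.range N).finite_toSet.biUnion fun n _ => (Set.finite_Icc _ _).image _
  have hlarge := hx.tendsto_cofinite.eventually_mem hfin.compl_mem_cofinite
  rw [Nat.cofinite_eq_atTop] at hlarge
  filter_upwards [hlarge] with m hm
  obtain ⟨n, r, hr₁, hr, hxm⟩ := hrange ⟨m, rfl⟩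
  have hn : N ≤ n := by
    by_contra! hn
    exact hm (Set.mem_biUnion (Finset.mem_range.2 hn) ⟨r, ⟨hr₁, hr⟩, hxm.symm⟩)
  calc ‖(x m : ℤ) • (α : Circle1)‖ = ‖((r * θ α n : ℝ) : Circle1)‖ := by
        rw [hxm, natCast_zsmul, mul_nsmul', ← coe_θ, ← AddCircle.coe_nsmul, nsmul_eq_mul]
    _ ≤ r * |θ α n| := by simpa [abs_mul] using Circle1.norm_coe_le_abs (r * θ α n)
    _ ≤ a α (n + 1) * |θ α n| := by gcongr
    _ ≤ gaussProd α n := a_mul_abs_θ_le hG n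
    _ < ε := hN n hn

theorem eventually_a_mul_norm_nsmul_lt {x : ℕ → ℕ} (hrange : denomMultiples α ⊆ Set.range x)
    {t : Circle1} (ht : t ∈ charSet (fun m => (x m : ℤ))) {ε : ℝ} (hε : 0 < ε)
    (hε' : ε ≤ 1 / 4) : ∀ᶠ n in atTop, a α (n + 1) * ‖q α n • t‖ < ε := by
  obtain ⟨M, hM⟩ := eventually_atTop.1 (NormedAddGroup.tendsto_nhds_zero.1 ht ε hε)
  filter_upwards [eventually_gt_atTop ((Finset.range M).sup x)] with n hn
  refine Circle1.mul_norm_lt_of_forall_norm_nsmul_lt hε hε' fun r hr₁ hr => ?_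
  obtain ⟨m, hm⟩ := hrange ⟨n, r, hr₁, hr, rfl⟩
  have hMm : M ≤ m := by
    by_contra! hmM
    have h₁ : x m ≤ (Finset.range M).sup x := Finset.le_sup (Finset.mem_range.2 hmM)
    have h₂ : n ≤ r * q α n := (le_q hG n).trans (Nat.le_mul_of_pos_left _ hr₁)
    omega
  have := hM m hMm
  simp only at this
  rwa [hm, natCast_zsmul, mul_nsmul'] at this

theorem eventually_round_add_two {y : ℝ}
    (h : ∀ᶠ n in atTop, a α (n + 1) * ‖q α n • (y : Circle1)‖ < 1 / 4) :
    ∀ᶠ n in atTop, (round (q α (n + 2) * y) : ℝ) =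
      a α (n + 2) * round (q α (n + 1) * y) + round (q α n * y) := by
  set e : ℕ → ℝ := fun k => q α k * y - round (q α k * y)
  have hsmall : ∀ᶠ k in atTop, a α (k + 1) * |e k| < 1 / 4 := by
    simpa only [Circle1.norm_nsmul_coe] using h
  have ha : ∀ k, (1 : ℝ) ≤ a α (k + 1) := fun k => by exact_mod_cast one_le_a hG k
  filter_upwards [hsmall, (tendsto_add_atTop_nat 1).eventually hsmall,
    (tendsto_add_atTop_nat 2).eventually hsmall] with n h₀ h₁ h₂
  -- The defect of `round (q · * y)` from the recurrence is an integer of absolute value `< 1`.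
  have hdefect : ((round (q α (n + 2) * y) - a α (n + 2) * round (q α (n + 1) * y) -
      round (q α n * y) : ℤ) : ℝ) = a α (n + 2) * e (n + 1) + e n - e (n + 2) := by
    push_cast [e, q_add_two]
    ring
  have hlt : |a α (n + 2) * e (n + 1) + e n - e (n + 2)| < 1 := by
    have := abs_nonneg (e n)
    have := abs_nonneg (e (n + 2))
    calc _ ≤ |a α (n + 2) * e (n + 1)| + |e n| + |e (n + 2)| :=
          (abs_sub _ _).trans (add_le_add_left (abs_add_le _ _) _)
      _ = a α (n + 2) * |e (n + 1)| + |e n| + |e (n + 2)| := by rw [abs_mul, Nat.abs_cast]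
      _ < 1 := by nlinarith [ha n, ha (n + 2)]
  rw [← hdefect] at hlt
  have hzero := Int.abs_lt_one_iff.1 (by exact_mod_cast hlt)
  have := congrArg (Int.cast : ℤ → ℝ) hzero
  push_cast at this
  linarith

theorem mem_zmultiples_of_mem_charSet {x : ℕ → ℕ}
    (hrange : denomMultiples α ⊆ Set.range x) {t : Circle1}
    (ht : t ∈ charSet (fun m => (x m : ℤ))) : t ∈ AddSubgroup.zmultiples (α : Circle1) := by
  induction t using QuotientAddGroup.induction_on with
  | H y =>
    set c : ℕ → ℝ := fun n => (round (q α n * y) : ℤ)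
    set e : ℕ → ℝ := fun n => q α n * y - round (q α n * y)
    obtain ⟨N, hN⟩ := (eventually_round_add_two hG
      (eventually_a_mul_norm_nsmul_lt hG hrange ht (by norm_num) le_rfl)).exists_forall_of_atTop
    have hconst : ∀ n ≥ N, casoratian c (θ α) n = casoratian c (θ α) N := fun n hn =>
      casoratian_eq_of_le (b := fun n => (a α n : ℝ)) hN (fun n _ => θ_add_two n) hn
    have hce : ∀ n, casoratian c (θ α) n = y - casoratian e (θ α) n := fun n => by
      have := casoratian_q_θ (α := α) n
      simp only [casoratian, c, e] at this ⊢
      linear_combination y * this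
    have hlim : Tendsto (casoratian c (θ α)) atTop (𝓝 y) := by
      have := (tendsto_const_nhds (x := y)).sub
        (tendsto_casoratian_zero (u := e) (fun n => abs_sub_round _) (tendsto_θ hG))
      rw [sub_zero] at this
      exact this.congr fun n => (hce n).symm
    have hy : y = casoratian c (θ α) N := tendsto_nhds_unique hlim
      (tendsto_const_nhds.congr' (eventually_atTop.2 ⟨N, fun n hn => (hconst n hn).symm⟩))
    rw [hy]
    exact coe_casoratian_mem_zmultiples _ N

end Gauss

end CF

/-- **Theorem 3.1 (Bíró–Deshouillers–Sós).** `t_(xₙ)(𝕋) = ⟨α⟩` is countably infinite. -/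
theorem stmt_18 (α : ℝ) (hα : α ∈ Set.Ioo (0 : ℝ) 1) (hirr : Irrational α)
    (x : ℕ → ℕ) (hmono : StrictMono x)
    (hrange : Set.range x =
      {m : ℕ | ∃ n r : ℕ, 1 ≤ r ∧ r ≤ a α (n + 1) ∧ m = r * q α n}) :
    charSet (fun n => (x n : ℤ)) =
        (AddSubgroup.zmultiples ((α : Circle1)) : Set Circle1) ∧
      (charSet (fun n => (x n : ℤ))).Countable ∧
      (charSet (fun n => (x n : ℤ))).Infinite := by
  have hG := G_mem_Ioo hα hirr
  have heq : charSet (fun n => (x n : ℤ)) = AddSubgroup.zmultiples (α : Circle1) :=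
    subset_antisymm (fun t ht => mem_zmultiples_of_mem_charSet hG hrange.ge ht)
      (AddSubgroup.zmultiples_le.2 (coe_mem_charSet hG hmono.injective hrange.le) :
        _ ≤ charSubgroup _)
  refine ⟨heq, ?_, ?_⟩
  · rw [heq, AddSubgroup.coe_zmultiples]
    exact Set.countable_range _
  · rw [heq, infinite_zmultiples, AddCircle.not_isOfFinAddOrder_iff_forall_rat_ne_div, div_one]
    exact fun r hr => hirr ⟨r, hr⟩
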